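/- arXiv:2012.03148 — 3 statements merged into one kernel-verified Lean document; each statement's English description precedes it below -/
import Mathlib

section
/- Left-multiplying the mass-lumped finite element block matrix by the block-diagonal matrix diag(D_∂D⁻¹ D_{e^V}⁻¹, D_∂V⁻¹ D_{e^D}⁻¹, D_V⁻¹) yields exactly the mimetic finite-difference block matrix; i.e., the scaled mass-lumped FE system equals the MFD system. -/
open Matrix

/-- A 3×3 block matrix. -/
def blk3 {α : Type*} {l m n : Type*}
    (A11 : Matrix l l α) (A12 : Matrix l m α) (A13 : Matrix l n α)
    (A21 : Matrix m l α) (A22 : Matrix m m α) (A23 : Matrix m n α)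
    (A31 : Matrix n l α) (A32 : Matrix n m α) (A33 : Matrix n n α) :
    Matrix (l ⊕ m ⊕ n) (l ⊕ m ⊕ n) α :=
  Matrix.of fun i j =>
    match i, j with
    | Sum.inl i, Sum.inl j => A11 i j
    | Sum.inl i, Sum.inr (Sum.inl j) => A12 i j
    | Sum.inl i, Sum.inr (Sum.inr j) => A13 i j
    | Sum.inr (Sum.inl i), Sum.inl j => A21 i j
    | Sum.inr (Sum.inl i), Sum.inr (Sum.inl j) => A22 i j
    | Sum.inr (Sum.inl i), Sum.inr (Sum.inr j) => A23 i j
    | Sum.inr (Sum.inr i), Sum.inl j => A31 i j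
    | Sum.inr (Sum.inr i), Sum.inr (Sum.inl j) => A32 i j
    | Sum.inr (Sum.inr i), Sum.inr (Sum.inr j) => A33 i j

lemma diag_inv' {n : ℕ} (d : Fin n → ℝ) (hd : ∀ i, d i ≠ 0) :
    (Matrix.diagonal d)⁻¹ = Matrix.diagonal (fun i => (d i)⁻¹) := by
  apply inv_eq_right_inv
  rw [Matrix.diagonal_mul_diagonal]
  ext i j
  by_cases h : i = j <;>
    simp [Matrix.diagonal_apply, h, mul_inv_cancel₀ (hd j), Matrix.one_apply]

lemma blk3_mul {α : Type*} [NonUnitalNonAssocSemiring α]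
    {l m n : Type*} [Fintype l] [Fintype m] [Fintype n]
    (A11 : Matrix l l α) (A12 : Matrix l m α) (A13 : Matrix l n α)
    (A21 : Matrix m l α) (A22 : Matrix m m α) (A23 : Matrix m n α)
    (A31 : Matrix n l α) (A32 : Matrix n m α) (A33 : Matrix n n α)
    (B11 : Matrix l l α) (B12 : Matrix l m α) (B13 : Matrix l n α)
    (B21 : Matrix m l α) (B22 : Matrix m m α) (B23 : Matrix m n α)
    (B31 : Matrix n l α) (B32 : Matrix n m α) (B33 : Matrix n n α) :
    blk3 A11 A12 A13 A21 A22 A23 A31 A32 A33 *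
      blk3 B11 B12 B13 B21 B22 B23 B31 B32 B33 =
    blk3 (A11*B11 + A12*B21 + A13*B31) (A11*B12 + A12*B22 + A13*B32) (A11*B13 + A12*B23 + A13*B33)
         (A21*B11 + A22*B21 + A23*B31) (A21*B12 + A22*B22 + A23*B32) (A21*B13 + A22*B23 + A23*B33)
         (A31*B11 + A32*B21 + A33*B31) (A31*B12 + A32*B22 + A33*B32) (A31*B13 + A32*B23 + A33*B33) := by
  ext i j
  rcases i with i | i | i <;> rcases j with j | j | j <;>
    simp [blk3, Matrix.mul_apply, Fintype.sum_sum_type, add_assoc]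

lemma cancel_aux (a b c x y : ℝ) (ha : a ≠ 0) (hb : b ≠ 0) :
    b * x * a * y * b⁻¹ * a⁻¹ * c = x * y * c := by
  field_simp


lemma aux1 (a b c : ℝ) (ha : a ≠ 0) (hb : b ≠ 0) :
    a⁻¹ * b⁻¹ * (c * (a * b)) = c := by field_simp; try ring

lemma aux2 (a b c : ℝ) (ha : a ≠ 0) (hb : b ≠ 0) :
    a⁻¹ * b⁻¹ * (a * b * c) = c := by field_simp; try ring

lemma aux3 (q e k a v : ℝ) (he : e ≠ 0) (ha : a ≠ 0) :
    q * e⁻¹ * (e * (k * a⁻¹) * (a * v)) = q * k * v := by field_simp; try ring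

lemma aux4 (w g e p : ℝ) (he : e ≠ 0) :
    w * (g * e⁻¹ * (p * e)) = w * g * p := by field_simp; try ring

lemma aux5 (v c : ℝ) (hv : v ≠ 0) :
    v⁻¹ * (c * v) = c := by field_simp; try ring

/-- Left-multiplying the mass-lumped FE block matrix by the
block-diagonal scaling diag(D_∂D⁻¹ D_{e^V}⁻¹, D_∂V⁻¹ D_{e^D}⁻¹, D_V⁻¹) yields
exactly the MFD block matrix. Here M̃_p = D_V, M̃_B = D_∂D D_{e^V},
M̃_E = D_∂V D_{e^D}, G^FE = D_{e^D}⁻¹ G, K^FE = D_∂D⁻¹ K D_{e^D}. -/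
theorem scaled_lumped_FE_eq_MFD {nB nE nP : ℕ} (τ : ℝ) (hτ : 0 < τ)
    (G : Matrix (Fin nE) (Fin nP) ℝ) (K : Matrix (Fin nB) (Fin nE) ℝ)
    (dV : Fin nP → ℝ) (dpD : Fin nB → ℝ) (deV : Fin nB → ℝ)
    (dpV : Fin nE → ℝ) (deD : Fin nE → ℝ)
    (hdV : ∀ i, dV i ≠ 0) (hdpD : ∀ i, dpD i ≠ 0) (hdeV : ∀ i, deV i ≠ 0)
    (hdpV : ∀ i, dpV i ≠ 0) (hdeD : ∀ i, deD i ≠ 0) :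
    (blk3
        ((Matrix.diagonal dpD)⁻¹ * (Matrix.diagonal deV)⁻¹) 0 0
        0 ((Matrix.diagonal dpV)⁻¹ * (Matrix.diagonal deD)⁻¹) 0
        0 0 ((Matrix.diagonal dV)⁻¹)) *
      (blk3
        ((2 / τ) • (Matrix.diagonal dpD * Matrix.diagonal deV))
        ((Matrix.diagonal dpD * Matrix.diagonal deV) *
          ((Matrix.diagonal dpD)⁻¹ * K * Matrix.diagonal deD))
        0
        (-(((Matrix.diagonal dpD)⁻¹ * K * Matrix.diagonal deD)ᵀ *
          (Matrix.diagonal dpD * Matrix.diagonal deV)))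
        ((2 / τ) • (Matrix.diagonal dpV * Matrix.diagonal deD))
        ((Matrix.diagonal dpV * Matrix.diagonal deD) * ((Matrix.diagonal deD)⁻¹ * G))
        0
        (-(((Matrix.diagonal deD)⁻¹ * G)ᵀ * (Matrix.diagonal dpV * Matrix.diagonal deD)))
        ((2 / τ) • Matrix.diagonal dV)) =
    blk3
      ((2 / τ) • (1 : Matrix (Fin nB) (Fin nB) ℝ))
      ((Matrix.diagonal dpD)⁻¹ * K * Matrix.diagonal deD)
      0
      (-((Matrix.diagonal dpV)⁻¹ * Kᵀ * Matrix.diagonal deV))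
      ((2 / τ) • (1 : Matrix (Fin nE) (Fin nE) ℝ))
      ((Matrix.diagonal deD)⁻¹ * G)
      0
      (-((Matrix.diagonal dV)⁻¹ * Gᵀ * Matrix.diagonal dpV))
      ((2 / τ) • (1 : Matrix (Fin nP) (Fin nP) ℝ)) := by
  rw [blk3_mul]
  rw [diag_inv' dV hdV, diag_inv' dpD hdpD, diag_inv' deV hdeV,
    diag_inv' dpV hdpV, diag_inv' deD hdeD]
  simp only [Matrix.mul_zero, Matrix.zero_mul, add_zero, zero_add]
  ext i j
  rcases i with i | i | i <;> rcases j with j | j | j <;>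
    simp [blk3, Matrix.mul_apply, Matrix.diagonal_apply, Matrix.smul_apply, Matrix.one_apply,
      Finset.sum_ite_eq, ite_mul, mul_ite, Finset.mul_sum, Finset.sum_mul]
  all_goals try split_ifs with h
  all_goals try subst h
  all_goals first
    | rfl
    | exact aux1 _ _ _ (hdpD i) (hdeV i)
    | exact aux1 _ _ _ (hdpV i) (hdeD i)
    | exact aux2 _ _ _ (hdpD i) (hdeV i)
    | exact aux2 _ _ _ (hdpV i) (hdeD i)
    | exact aux3 _ _ _ _ _ (hdeD i) (hdpD j)
    | exact aux4 _ _ _ _ (hdeD j)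
    | exact aux5 _ _ (hdV i)
end

section
/- For the upper-triangular preconditioner X_SU = U⁻¹ Q: a nonzero vector x satisfies X_SU A x = λ x if and only if y = U x satisfies Q L S y = λ y; hence spec(X_SU A) = spec(Q L S), which for Q L S block lower triangular with diagonal blocks I, Q_E S_E, Q_p S_p lies in [c₁, c₂]. -/
/-!
`X_SU A = U⁻¹ (Q L S) U` is similar to `Q L S`, so `x ↦ U x` carries eigenvectors of the one to
eigenvectors of the other. Writing `Q L S` as nested 2×2 block lower triangular matrices, an
eigenvector restricts, on the first block where it is nonzero, to an eigenvector of the diagonal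
block there with the same eigenvalue. The diagonal blocks are `(τ/2)(2/τ) I = I`, `Q_E S_E` and
`Q_p S_p`, and `c₁ ≤ 1 ≤ c₂` covers the identity block.
-/

open Matrix

theorem blk3_eq_fromBlocks {α : Type*} {l m n : Type*}
    (A11 : Matrix l l α) (A12 : Matrix l m α) (A13 : Matrix l n α)
    (A21 : Matrix m l α) (A22 : Matrix m m α) (A23 : Matrix m n α)
    (A31 : Matrix n l α) (A32 : Matrix n m α) (A33 : Matrix n n α) :
    blk3 A11 A12 A13 A21 A22 A23 A31 A32 A33 =
      fromBlocks A11 (fromCols A12 A13) (fromRows A21 A31) (fromBlocks A22 A23 A32 A33) := by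
  ext (i | i | i) (j | j | j) <;> rfl

namespace Matrix

variable {R n : Type*} [Fintype n]

def EigenvaluesIn [Semiring R] (M : Matrix n n R) (s : Set R) : Prop :=
  ∀ (μ : R) (v : n → R), v ≠ 0 → M *ᵥ v = μ • v → μ ∈ s

theorem eigenvaluesIn_one [Ring R] [NoZeroDivisors R] [DecidableEq n] {s : Set R} (h : 1 ∈ s) :
    EigenvaluesIn (1 : Matrix n n R) s := by
  intro μ v hv hμ
  obtain ⟨i, hi⟩ := Function.ne_iff.mp hv
  have hvi : v i = μ * v i := by simpa using congrFun hμ i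
  rwa [(mul_eq_right₀ hi).mp hvi.symm]

theorem EigenvaluesIn.fromBlocks_zero₁₂ [Semiring R] {m : Type*} [Fintype m]
    {A : Matrix m m R} {C : Matrix n m R} {D : Matrix n n R} {s : Set R}
    (hA : EigenvaluesIn A s) (hD : EigenvaluesIn D s) :
    EigenvaluesIn (fromBlocks A 0 C D) s := by
  intro μ v hv hμ
  rw [fromBlocks_mulVec, zero_mulVec, add_zero] at hμ
  by_cases hv₁ : v ∘ Sum.inl = 0
  · have hv₂ : v ∘ Sum.inr ≠ 0 := fun hv₂ ↦
      hv (by ext (i | i); exacts [congrFun hv₁ i, congrFun hv₂ i])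
    refine hD μ _ hv₂ ?_
    funext i; simpa [hv₁] using congrFun hμ (Sum.inr i)
  · refine hA μ _ hv₁ ?_
    funext i; simpa using congrFun hμ (Sum.inl i)

theorem conj_mulVec_eq_smul_iff [CommRing R] [DecidableEq n] {M U : Matrix n n R}
    (hU : IsUnit U.det) (μ : R) (v : n → R) :
    (U⁻¹ * M * U) *ᵥ v = μ • v ↔ M *ᵥ (U *ᵥ v) = μ • (U *ᵥ v) := by
  have hM : M *ᵥ (U *ᵥ v) = U *ᵥ ((U⁻¹ * M * U) *ᵥ v) := by
    rw [mulVec_mulVec, mulVec_mulVec, ← mul_assoc, ← mul_assoc, mul_nonsing_inv U hU, one_mul]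
  rw [hM, ← mulVec_smul, (mulVec_injective_of_isUnit ((isUnit_iff_isUnit_det U).mpr hU)).eq_iff]

theorem EigenvaluesIn.conj [CommRing R] [DecidableEq n] {M U : Matrix n n R} {s : Set R}
    (hU : IsUnit U.det) (hM : EigenvaluesIn M s) : EigenvaluesIn (U⁻¹ * M * U) s := by
  intro μ v hv hμ
  have hUv : U *ᵥ v ≠ 0 :=
    (mulVec_injective_of_isUnit ((isUnit_iff_isUnit_det U).mpr hU)).ne_iff' (mulVec_zero U) |>.mpr hv
  exact hM μ _ hUv ((conj_mulVec_eq_smul_iff hU μ v).mp hμ)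

theorem fromBlocks_diagonal_mul_lower_mul_diagonal [Semiring R] {m : Type*} [Fintype m]
    (Q₁ L₁ S₁ : Matrix m m R) (Q₂ L₂ S₂ : Matrix n n R) (C : Matrix n m R) :
    fromBlocks Q₁ 0 0 Q₂ * fromBlocks L₁ 0 C L₂ * fromBlocks S₁ 0 0 S₂ =
      fromBlocks (Q₁ * L₁ * S₁) 0 (Q₂ * C * S₁) (Q₂ * L₂ * S₂) := by
  simp [fromBlocks_multiply]

end Matrix

theorem XSU_eigen_general {nB nE nP : ℕ} (τ : ℝ) (hτ : 0 < τ) (c₁ c₂ : ℝ)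
    (hc₁1 : c₁ ≤ 1) (h1c₂ : 1 ≤ c₂)
    (SE QE : Matrix (Fin nE) (Fin nE) ℝ) (Sp Qp : Matrix (Fin nP) (Fin nP) ℝ)
    (L21 : Matrix (Fin nE) (Fin nB) ℝ) (L31 : Matrix (Fin nP) (Fin nB) ℝ)
    (L32 : Matrix (Fin nP) (Fin nE) ℝ)
    (Q L S U : Matrix (Fin nB ⊕ Fin nE ⊕ Fin nP) (Fin nB ⊕ Fin nE ⊕ Fin nP) ℝ)
    (hQ : Q = blk3 ((τ / 2) • (1 : Matrix (Fin nB) (Fin nB) ℝ)) 0 0 0 QE 0 0 0 Qp)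
    (hS : S = blk3 ((2 / τ) • (1 : Matrix (Fin nB) (Fin nB) ℝ)) 0 0 0 SE 0 0 0 Sp)
    (hLmat : L = blk3 (1 : Matrix (Fin nB) (Fin nB) ℝ) 0 0
        L21 (1 : Matrix (Fin nE) (Fin nE) ℝ) 0
        L31 L32 (1 : Matrix (Fin nP) (Fin nP) ℝ))
    (hU : IsUnit U.det)
    (hQESE : ∀ (μ : ℝ) (x : Fin nE → ℝ), x ≠ 0 → (QE * SE) *ᵥ x = μ • x →
      c₁ ≤ μ ∧ μ ≤ c₂)
    (hQpSp : ∀ (μ : ℝ) (x : Fin nP → ℝ), x ≠ 0 → (Qp * Sp) *ᵥ x = μ • x →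
      c₁ ≤ μ ∧ μ ≤ c₂) :
    (∀ (μ : ℝ) (x : (Fin nB ⊕ Fin nE ⊕ Fin nP) → ℝ), x ≠ 0 →
      (((U⁻¹ * Q) * (L * S * U)) *ᵥ x = μ • x ↔
        (Q * L * S) *ᵥ (U *ᵥ x) = μ • (U *ᵥ x)))
    ∧
    (∀ (μ : ℝ) (x : (Fin nB ⊕ Fin nE ⊕ Fin nP) → ℝ), x ≠ 0 →
      ((U⁻¹ * Q) * (L * S * U)) *ᵥ x = μ • x → c₁ ≤ μ ∧ μ ≤ c₂) := by
  have hconj : U⁻¹ * Q * (L * S * U) = U⁻¹ * (Q * L * S) * U := by simp only [mul_assoc]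
  have hscalar : (τ / 2) • (1 : Matrix (Fin nB) (Fin nB) ℝ) * (2 / τ) • 1 = 1 := by
    rw [smul_mul_smul, Matrix.one_mul, div_mul_div_cancel₀ two_ne_zero,
      div_self hτ.ne', one_smul]
  have hQLS : (Q * L * S).EigenvaluesIn (Set.Icc c₁ c₂) := by
    simp only [hQ, hLmat, hS, blk3_eq_fromBlocks, fromCols_zero, fromRows_zero,
      fromBlocks_diagonal_mul_lower_mul_diagonal, hscalar, Matrix.mul_one]
    exact .fromBlocks_zero₁₂ (eigenvaluesIn_one ⟨hc₁1, h1c₂⟩) (.fromBlocks_zero₁₂ hQESE hQpSp)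
  rw [hconj]
  exact ⟨fun μ x _ ↦ conj_mulVec_eq_smul_iff hU μ x, hQLS.conj hU⟩

/-- For X_SU = U⁻¹ Q and A = L S U: a nonzero x satisfies
X_SU A x = μ x iff y = U x satisfies Q L S y = μ y; hence the eigenvalues of
X_SU A are those of the block lower triangular matrix Q L S with diagonal
blocks I, Q_E S_E, Q_p S_p, and lie in [c₁, c₂]. -/
theorem XSU_eigen {nB nE nP : ℕ} (τ : ℝ) (hτ : 0 < τ) (c₁ c₂ : ℝ)
    (hc₁ : 0 < c₁) (hc₁1 : c₁ ≤ 1) (h1c₂ : 1 ≤ c₂)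
    (SE QE : Matrix (Fin nE) (Fin nE) ℝ) (Sp Qp : Matrix (Fin nP) (Fin nP) ℝ)
    (L21 : Matrix (Fin nE) (Fin nB) ℝ) (L31 : Matrix (Fin nP) (Fin nB) ℝ)
    (L32 : Matrix (Fin nP) (Fin nE) ℝ)
    (Q L S U : Matrix (Fin nB ⊕ Fin nE ⊕ Fin nP) (Fin nB ⊕ Fin nE ⊕ Fin nP) ℝ)
    (hQ : Q = blk3 ((τ / 2) • (1 : Matrix (Fin nB) (Fin nB) ℝ)) 0 0 0 QE 0 0 0 Qp)
    (hS : S = blk3 ((2 / τ) • (1 : Matrix (Fin nB) (Fin nB) ℝ)) 0 0 0 SE 0 0 0 Sp)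
    (hLmat : L = blk3 (1 : Matrix (Fin nB) (Fin nB) ℝ) 0 0
        L21 (1 : Matrix (Fin nE) (Fin nE) ℝ) 0
        L31 L32 (1 : Matrix (Fin nP) (Fin nP) ℝ))
    (hU : IsUnit U.det)
    (hQESE : ∀ (μ : ℝ) (x : Fin nE → ℝ), x ≠ 0 → (QE * SE) *ᵥ x = μ • x →
      c₁ ≤ μ ∧ μ ≤ c₂)
    (hQpSp : ∀ (μ : ℝ) (x : Fin nP → ℝ), x ≠ 0 → (Qp * Sp) *ᵥ x = μ • x →
      c₁ ≤ μ ∧ μ ≤ c₂) :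
    (∀ (μ : ℝ) (x : (Fin nB ⊕ Fin nE ⊕ Fin nP) → ℝ), x ≠ 0 →
      (((U⁻¹ * Q) * (L * S * U)) *ᵥ x = μ • x ↔
        (Q * L * S) *ᵥ (U *ᵥ x) = μ • (U *ᵥ x)))
    ∧
    (∀ (μ : ℝ) (x : (Fin nB ⊕ Fin nE ⊕ Fin nP) → ℝ), x ≠ 0 →
      ((U⁻¹ * Q) * (L * S * U)) *ᵥ x = μ • x → c₁ ≤ μ ∧ μ ≤ c₂) :=
  XSU_eigen_general τ hτ c₁ c₂ hc₁1 h1c₂ SE QE Sp Qp L21 L31 L32 Q L S U hQ hS hLmat hU hQESE hQpSp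
end

section
/- For the preconditioner X_LS = Q L⁻¹ applied to A = L S U: the B-component update satisfies π_B(X_LS A v) = v_B + (τ/2) curl_D v_E; hence if div_V v_B = 0 then div_V π_B(X_LS A v) = 0, using div_V curl_D = 0. -/
open Matrix

/-- For X_LS = Q L⁻¹ applied to the MFD matrix A: the B-component
of X_LS A v is v_B + (τ/2) curl_D v_E; hence if div_V v_B = 0 then the
B-component of X_LS A v is also divergence free, using div_V curl_D = 0. -/
theorem XLS_B_component_update {nB nE nP mV : ℕ} (τ : ℝ) (hτ : 0 < τ)
    (curlD : Matrix (Fin nB) (Fin nE) ℝ) (curlV : Matrix (Fin nE) (Fin nB) ℝ)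
    (gradD : Matrix (Fin nE) (Fin nP) ℝ) (divD : Matrix (Fin nP) (Fin nE) ℝ)
    (QE : Matrix (Fin nE) (Fin nE) ℝ) (Qp : Matrix (Fin nP) (Fin nP) ℝ)
    (divV : Matrix (Fin mV) (Fin nB) ℝ) (hdvc : divV * curlD = 0)
    (A L Q Linv : Matrix (Fin nB ⊕ Fin nE ⊕ Fin nP) (Fin nB ⊕ Fin nE ⊕ Fin nP) ℝ)
    (hA : A = blk3
      ((2 / τ) • (1 : Matrix (Fin nB) (Fin nB) ℝ)) curlD 0
      (-curlV) ((2 / τ) • (1 : Matrix (Fin nE) (Fin nE) ℝ)) gradD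
      0 (-divD) ((2 / τ) • (1 : Matrix (Fin nP) (Fin nP) ℝ)))
    (hL : L = blk3
      (1 : Matrix (Fin nB) (Fin nB) ℝ) 0 0
      (-((τ / 2) • curlV)) (1 : Matrix (Fin nE) (Fin nE) ℝ) 0
      0 (-((τ / 2) • divD)) (1 : Matrix (Fin nP) (Fin nP) ℝ))
    (hQ : Q = blk3 ((τ / 2) • (1 : Matrix (Fin nB) (Fin nB) ℝ)) 0 0 0 QE 0 0 0 Qp)
    (hLinv : L * Linv = 1) (hinvL : Linv * L = 1)
    (v : (Fin nB ⊕ Fin nE ⊕ Fin nP) → ℝ) :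
    (∀ i : Fin nB, (((Q * Linv) * A) *ᵥ v) (Sum.inl i) =
      v (Sum.inl i) + (τ / 2) * ((curlD *ᵥ fun j => v (Sum.inr (Sum.inl j))) i))
    ∧
    ((divV *ᵥ fun i => v (Sum.inl i)) = 0 →
      (divV *ᵥ fun i => (((Q * Linv) * A) *ᵥ v) (Sum.inl i)) = 0) := by

  have hτ0 : τ ≠ 0 := ne_of_gt hτ
  -- first block row of Linv equals that of the identity
  have hLinv1 : ∀ (i : Fin nB) j, Linv (Sum.inl i) j =
      (1 : Matrix (Fin nB ⊕ Fin nE ⊕ Fin nP) (Fin nB ⊕ Fin nE ⊕ Fin nP) ℝ) (Sum.inl i) j := by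
    intro i j
    have h := congrFun (congrFun hLinv (Sum.inl i)) j
    simpa [hL, blk3, Matrix.mul_apply, Fintype.sum_sum_type, Matrix.one_apply,
      ite_mul, Finset.sum_ite_eq] using h
  -- first block row of (Q * Linv) * A equals (τ/2) times the first block row of A
  have hM : ∀ (i : Fin nB) j, ((Q * Linv) * A) (Sum.inl i) j = (τ / 2) * A (Sum.inl i) j := by
    intro i j
    have hQL : ∀ k, (Q * Linv) (Sum.inl i) k = (τ / 2) * Linv (Sum.inl i) k := by
      intro k
      simp [hQ, blk3, Matrix.mul_apply, Fintype.sum_sum_type, Matrix.one_apply,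
        ite_mul, mul_ite, Finset.sum_ite_eq]
    simp only [Matrix.mul_apply, hQL, hLinv1]
    simp [Matrix.one_apply, Fintype.sum_sum_type, ite_mul, Finset.sum_ite_eq]
  have hB : ∀ i : Fin nB, (((Q * Linv) * A) *ᵥ v) (Sum.inl i) =
      v (Sum.inl i) + (τ / 2) * ((curlD *ᵥ fun j => v (Sum.inr (Sum.inl j))) i) := by
    intro i
    simp only [Matrix.mulVec, dotProduct, Fintype.sum_sum_type, hM]
    simp [hA, blk3, Matrix.one_apply, ite_mul, mul_ite, Finset.sum_ite_eq,
      Matrix.mulVec, dotProduct, Finset.mul_sum, mul_assoc]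
    field_simp
  refine ⟨hB, fun hdiv => ?_⟩
  have : (fun i => (((Q * Linv) * A) *ᵥ v) (Sum.inl i)) =
      (fun i => v (Sum.inl i)) + (τ / 2) • (curlD *ᵥ fun j => v (Sum.inr (Sum.inl j))) := by
    funext i
    simp [hB i]
  rw [this, Matrix.mulVec_add, hdiv, Matrix.mulVec_smul, Matrix.mulVec_mulVec, hdvc]
  simp
end
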